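/- Let N, M ≥ 2 be integers, P > 0, α > 0, and let I(θ) be the 4×4 Fisher information matrix with entries [I(θ)]_{jk} = 2 Re Σ_{n=0}^{N−1} Σ_{m=0}^{M−1} conj(∂s_{n,m}/∂θ_j)·(∂s_{n,m}/∂θ_k), where s_{n,m}(θ) = √P·α·exp(i(φ + 2πnf − 2πmt)) and θ = (α, φ, f, t). Then I(θ) is invertible and the (f,f) diagonal entry of its inverse, i.e., the Cramér-Rao lower bound on the variance of any unbiased estimator of the normalized Doppler f, equals [I(θ)⁻¹]_{ff} = 6 / ((2π)² α² P · M N (N² − 1)). -/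

import Mathlib

open Real Finset

/-- The noiseless OFDM radar observation `s_{n,m}(α,φ,f,t) = √P·α·exp(i(φ + 2πnf − 2πmt))`. -/
noncomputable def ofdmSig (P : ℝ) (α φ f t : ℝ) (n m : ℕ) : ℂ :=
  (Real.sqrt P : ℂ) * (α : ℂ) *
    Complex.exp (Complex.I * ((φ : ℂ) + 2 * (π : ℂ) * (n : ℂ) * (f : ℂ)
      - 2 * (π : ℂ) * (m : ℂ) * (t : ℂ)))

/-- Partial derivative of `s_{n,m}` with respect to the `j`-th parameter of
`θ = (α, φ, f, t)`. -/
noncomputable def ofdmDs (P : ℝ) (α φ f t : ℝ) (j : Fin 4) (n m : ℕ) : ℂ :=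
  match j with
  | 0 => deriv (fun a : ℝ => ofdmSig P a φ f t n m) α
  | 1 => deriv (fun p : ℝ => ofdmSig P α p f t n m) φ
  | 2 => deriv (fun fr : ℝ => ofdmSig P α φ fr t n m) f
  | 3 => deriv (fun ti : ℝ => ofdmSig P α φ f ti n m) t

/-- The 4×4 Fisher information matrix
`[I(θ)]_{jk} = 2 Re Σ_{n,m} conj(∂s_{n,m}/∂θ_j)·(∂s_{n,m}/∂θ_k)`. -/
noncomputable def ofdmFisher (N M : ℕ) (P : ℝ) (α φ f t : ℝ) :
    Matrix (Fin 4) (Fin 4) ℝ :=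
  Matrix.of fun j k =>
    2 * (∑ n ∈ Finset.range N, ∑ m ∈ Finset.range M,
      (starRingEnd ℂ) (ofdmDs P α φ f t j n m) * ofdmDs P α φ f t k n m).re

/-!
The derivatives of `s_{n,m}` are `√P (e₀ + i α∇ψ) e^{iψ}`, where `ψ` is the phase, so the unimodular
factor cancels and `I(θ) = 2P Σ (e₀e₀ᵀ + α²∇ψ∇ψᵀ)`. Writing `α∇ψ = c ᵥ* K` with the indices centred
at their means, `c = (0, 1, n - (N-1)/2, m - (M-1)/2)`, the centred moments
`Σ (n - (N-1)/2) = 0` and `Σ (n - (N-1)/2)² = N(N²-1)/12` make `Σ (e₀e₀ᵀ + ccᵀ)` diagonal, so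
`I(θ) = Kᵀ D K` with `D` diagonal. Row `f` of the triangular matrix `K` is `2πα e_f`, hence
`[I⁻¹]_{ff} = 1 / ((2πα)² D_f)`.
-/

open Matrix

theorem Complex.deriv_ofReal (x : ℝ) : deriv (fun y : ℝ => (y : ℂ)) x = 1 :=
  (hasDerivAt_id x).ofReal_comp.deriv

theorem Complex.re_conj_mul_of_norm_eq_one (s a b c d : ℝ) {e : ℂ} (he : ‖e‖ = 1) :
    ((starRingEnd ℂ) (s * (a + Complex.I * b) * e) * (s * (c + Complex.I * d) * e)).re =
      s ^ 2 * (a * c + b * d) := by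
  have hee : (starRingEnd ℂ) e * e = 1 := by
    rw [Complex.conj_mul', he]; simp
  calc _ = ((starRingEnd ℂ) (s * (a + Complex.I * b)) * (s * (c + Complex.I * d)) *
        ((starRingEnd ℂ) e * e)).re := by rw [map_mul]; congr 1; ring
    _ = _ := by
      rw [hee, mul_one]
      simp only [map_mul, map_add, Complex.conj_ofReal, Complex.conj_I, Complex.mul_re,
        Complex.mul_im, Complex.add_re, Complex.add_im, Complex.neg_re, Complex.neg_im,
        Complex.ofReal_re, Complex.ofReal_im, Complex.I_re, Complex.I_im, neg_mul]
      ring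

theorem Finset.sum_range_natCast_real (N : ℕ) : ∑ n ∈ range N, (n : ℝ) = N * (N - 1) / 2 := by
  induction N with
  | zero => simp
  | succ k ih => rw [sum_range_succ, ih]; push_cast; ring

theorem Finset.sum_range_natCast_sq_real (N : ℕ) :
    ∑ n ∈ range N, (n : ℝ) ^ 2 = N * (N - 1) * (2 * N - 1) / 6 := by
  induction N with
  | zero => simp
  | succ k ih => rw [sum_range_succ, ih]; push_cast; ring

theorem Finset.sum_range_sub_mean (N : ℕ) : ∑ n ∈ range N, ((n : ℝ) - (N - 1) / 2) = 0 := by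
  rw [sum_sub_distrib, sum_range_natCast_real, sum_const, card_range, nsmul_eq_mul]; ring

theorem Finset.sum_range_sub_mean_sq (N : ℕ) :
    ∑ n ∈ range N, ((n : ℝ) - (N - 1) / 2) ^ 2 = N * ((N : ℝ) ^ 2 - 1) / 12 := by
  simp only [sub_sq, sum_add_distrib, sum_sub_distrib, ← sum_mul, ← mul_sum, sum_const,
    card_range, nsmul_eq_mul]
  rw [sum_range_natCast_sq_real, sum_range_natCast_real]
  ring

theorem Matrix.vecMulVec_vecMul {ι R : Type*} [Fintype ι] [CommSemiring R] (x y : ι → R)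
    (K : Matrix ι ι R) : vecMulVec (x ᵥ* K) (y ᵥ* K) = Kᵀ * vecMulVec x y * K := by
  rw [Matrix.mul_assoc, vecMulVec_mul, mul_vecMulVec, mulVec_transpose]

theorem Matrix.isUnit_det_transpose_mul_diagonal_mul {ι 𝕜 : Type*} [Fintype ι] [DecidableEq ι]
    [Field 𝕜] {K : Matrix ι ι 𝕜} (hK : IsUnit K.det) {d : ι → 𝕜} (hd : ∀ i, d i ≠ 0) :
    IsUnit (Kᵀ * diagonal d * K).det := by
  rw [det_mul, det_mul, det_transpose, det_diagonal]
  exact (hK.mul (isUnit_iff_ne_zero.2 (prod_ne_zero_iff.2 fun i _ => hd i))).mul hK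

theorem Matrix.inv_transpose_mul_diagonal_mul_apply_self {ι 𝕜 : Type*} [Fintype ι]
    [DecidableEq ι] [Field 𝕜] {K : Matrix ι ι 𝕜} (hK : IsUnit K.det) {d : ι → 𝕜}
    (hd : ∀ i, d i ≠ 0) {i : ι} {κ : 𝕜} (hKi : K i = κ • Pi.single i 1) :
    (Kᵀ * diagonal d * K)⁻¹ i i = (κ ^ 2 * d i)⁻¹ := by
  have hrow : ∀ j, κ * K⁻¹ i j = (1 : Matrix ι ι 𝕜) i j := fun j => by
    simp [← mul_nonsing_inv K hK, mul_apply, hKi, Pi.single_apply]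
  have hκ : κ ≠ 0 := left_ne_zero_of_mul_eq_one (by simpa using hrow i)
  have hKinv : K⁻¹ i = κ⁻¹ • Pi.single i 1 := by
    ext j
    rw [Pi.smul_apply, eq_inv_smul_iff₀ hκ, smul_eq_mul, hrow]
    simp [one_apply, Pi.single_apply, eq_comm]
  have hD : (diagonal d)⁻¹ = diagonal d⁻¹ :=
    inv_eq_left_inv (by rw [diagonal_mul_diagonal, ← diagonal_one]; simp [hd])
  rw [mul_inv_rev, mul_inv_rev, hD, ← transpose_nonsing_inv]
  simp only [mul_apply, transpose_apply, hKinv, Pi.smul_apply, Pi.single_apply, smul_eq_mul,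
    mul_ite, ite_mul, mul_one, mul_zero, zero_mul, sum_ite_eq', mem_univ, if_true,
    diagonal_apply_eq, Pi.inv_apply]
  ring

theorem Matrix.sum_sum_vecMulVec_of_sum_eq_zero {ι κ R : Type*} [CommRing R] (s : Finset ι)
    (t : Finset κ) {x : ι → R} {y : κ → R} (hx : ∑ i ∈ s, x i = 0) (hy : ∑ j ∈ t, y j = 0) :
    ∑ i ∈ s, ∑ j ∈ t, (vecMulVec ![1, 0, 0, 0] ![1, 0, 0, 0] +
        vecMulVec ![0, 1, x i, y j] ![0, 1, x i, y j]) =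
      diagonal ![(#s * #t : R), #s * #t, #t * ∑ i ∈ s, x i ^ 2, #s * ∑ j ∈ t, y j ^ 2] := by
  ext a b
  fin_cases a <;> fin_cases b <;>
    simp [Matrix.sum_apply, ← mul_sum, ← sum_mul, ← pow_two, hx, hy, mul_comm]

/-- `α` times the gradient of the phase `φ + 2πnf − 2πmt` in `θ = (α, φ, f, t)`. -/
noncomputable def ofdmPhaseGrad (α : ℝ) (n m : ℕ) : Fin 4 → ℝ :=
  ![0, α, 2 * π * α * n, -(2 * π * α * m)]

theorem ofdmDs_eq (P α φ f t : ℝ) (j : Fin 4) (n m : ℕ) :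
    ofdmDs P α φ f t j n m =
      Real.sqrt P * ((![1, 0, 0, 0] : Fin 4 → ℝ) j + Complex.I * ofdmPhaseGrad α n m j) *
        Complex.exp (Complex.I * (φ + 2 * π * n * f - 2 * π * m * t)) := by
  fin_cases j <;>
    simp (disch := fun_prop) [ofdmDs, ofdmSig, ofdmPhaseGrad, deriv_cexp, Complex.deriv_ofReal] <;>
    ring

theorem ofdmFisher_eq_sum (N M : ℕ) (P : ℝ) (hP : 0 ≤ P) (α φ f t : ℝ) :
    ofdmFisher N M P α φ f t = (2 * P) • ∑ n ∈ range N, ∑ m ∈ range M,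
      (vecMulVec ![1, 0, 0, 0] ![1, 0, 0, 0] +
        vecMulVec (ofdmPhaseGrad α n m) (ofdmPhaseGrad α n m)) := by
  ext j k
  simp only [ofdmFisher, of_apply, ofdmDs_eq, Complex.re_sum, Matrix.smul_apply, Matrix.sum_apply,
    Matrix.add_apply, vecMulVec_apply, smul_eq_mul, mul_sum]
  have he (n m : ℕ) : ‖Complex.exp (Complex.I * (φ + 2 * π * n * f - 2 * π * m * t))‖ = 1 := by
    simp [Complex.norm_exp]
  refine sum_congr rfl fun n _ => sum_congr rfl fun m _ => ?_
  rw [Complex.re_conj_mul_of_norm_eq_one _ _ _ _ _ (he n m), Real.sq_sqrt hP, mul_assoc]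

noncomputable def ofdmK (N M : ℕ) (α : ℝ) : Matrix (Fin 4) (Fin 4) ℝ :=
  !![1, 0, 0, 0;
     0, α, 2 * π * α * ((N - 1) / 2), -(2 * π * α * ((M - 1) / 2));
     0, 0, 2 * π * α, 0;
     0, 0, 0, -(2 * π * α)]

noncomputable def ofdmCentered (N M n m : ℕ) : Fin 4 → ℝ :=
  ![0, 1, n - (N - 1) / 2, m - (M - 1) / 2]

theorem ofdmCentered_vecMul_ofdmK (N M : ℕ) (α : ℝ) (n m : ℕ) :
    ofdmCentered N M n m ᵥ* ofdmK N M α = ofdmPhaseGrad α n m := by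
  ext j
  fin_cases j <;>
    simp [vecMul, dotProduct, Fin.sum_univ_four, ofdmK, ofdmCentered, ofdmPhaseGrad] <;> ring

theorem vecMul_ofdmK_amplitude (N M : ℕ) (α : ℝ) :
    ![1, 0, 0, 0] ᵥ* ofdmK N M α = ![1, 0, 0, 0] := by
  ext j; fin_cases j <;> simp [vecMul, dotProduct, Fin.sum_univ_four, ofdmK]

theorem det_ofdmK (N M : ℕ) (α : ℝ) : (ofdmK N M α).det = -(α * (2 * π * α) ^ 2) := by
  simp [det_succ_row_zero, Fin.sum_univ_succ, ofdmK, sq]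

theorem ofdmK_apply_two (N M : ℕ) (α : ℝ) : ofdmK N M α 2 = (2 * π * α) • Pi.single 2 1 := by
  ext j; fin_cases j <;> simp [ofdmK]

noncomputable def ofdmCenteredFisher (N M : ℕ) (P : ℝ) : Fin 4 → ℝ :=
  (2 * P) •
    ![(N * M : ℝ), N * M, M * (N * ((N : ℝ) ^ 2 - 1) / 12), N * (M * ((M : ℝ) ^ 2 - 1) / 12)]

theorem ofdmFisher_eq (N M : ℕ) (P : ℝ) (hP : 0 ≤ P) (α φ f t : ℝ) :
    ofdmFisher N M P α φ f t =
      (ofdmK N M α)ᵀ * diagonal (ofdmCenteredFisher N M P) * ofdmK N M α := by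
  set K := ofdmK N M α
  calc ofdmFisher N M P α φ f t
      = (2 * P) • ∑ n ∈ range N, ∑ m ∈ range M,
          (vecMulVec (![1, 0, 0, 0] ᵥ* K) (![1, 0, 0, 0] ᵥ* K) +
            vecMulVec (ofdmCentered N M n m ᵥ* K) (ofdmCentered N M n m ᵥ* K)) := by
        simp only [K, vecMul_ofdmK_amplitude, ofdmCentered_vecMul_ofdmK, ofdmFisher_eq_sum N M P hP]
    _ = (2 * P) • (Kᵀ * (∑ n ∈ range N, ∑ m ∈ range M,
          (vecMulVec ![1, 0, 0, 0] ![1, 0, 0, 0] +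
            vecMulVec (ofdmCentered N M n m) (ofdmCentered N M n m))) * K) := by
        simp only [vecMulVec_vecMul, ← Matrix.mul_add, ← Matrix.add_mul, Finset.mul_sum,
          Finset.sum_mul]
    _ = _ := by
        simp only [ofdmCentered]
        rw [sum_sum_vecMulVec_of_sum_eq_zero _ _ (sum_range_sub_mean N) (sum_range_sub_mean M),
          sum_range_sub_mean_sq, sum_range_sub_mean_sq, card_range, card_range, ofdmCenteredFisher,
          diagonal_smul, Matrix.mul_smul, Matrix.smul_mul]

/-- Cramér-Rao lower bound for the normalized Doppler shift `f` in OFDM radar with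
constant envelope `A_{n,m} = √P`: the Fisher information matrix is invertible and
`[I(θ)⁻¹]_{ff} = 6 / ((2π)² α² P · M N (N² − 1))`. -/
theorem ofdm_crlb_doppler
    (N M : ℕ) (hN : 2 ≤ N) (hM : 2 ≤ M) (P : ℝ) (hP : 0 < P)
    (α φ f t : ℝ) (hα : 0 < α) :
    IsUnit (ofdmFisher N M P α φ f t).det ∧
    (ofdmFisher N M P α φ f t)⁻¹ 2 2 =
      6 / ((2 * π) ^ 2 * α ^ 2 * P * M * N * ((N : ℝ) ^ 2 - 1)) := by
  have hN1 : (0 : ℝ) < (N : ℝ) ^ 2 - 1 := by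
    have : (2 : ℝ) ≤ N := by exact_mod_cast hN
    nlinarith
  have hM1 : (0 : ℝ) < (M : ℝ) ^ 2 - 1 := by
    have : (2 : ℝ) ≤ M := by exact_mod_cast hM
    nlinarith
  have hK : IsUnit (ofdmK N M α).det := by
    rw [det_ofdmK]; exact isUnit_iff_ne_zero.2 (neg_ne_zero.2 (by positivity))
  have hd : ∀ i, ofdmCenteredFisher N M P i ≠ 0 := by
    have hN0 : N ≠ 0 := by omega
    have hM0 : M ≠ 0 := by omega
    intro i; fin_cases i <;> simp [ofdmCenteredFisher, hP.ne', hN0, hM0, hN1.ne', hM1.ne']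
  rw [ofdmFisher_eq N M P hP.le]
  refine ⟨isUnit_det_transpose_mul_diagonal_mul hK hd, ?_⟩
  rw [inv_transpose_mul_diagonal_mul_apply_self hK hd (ofdmK_apply_two N M α)]
  simp only [ofdmCenteredFisher, Pi.smul_apply, Matrix.cons_val, smul_eq_mul]
  field_simp
  ring
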